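/- Suppose x, y, θ, λ, μ : ℝ × [0,ℓ] → ℝ are smooth and satisfy the nonholonomic planar Cosserat rod equations ρẍ + Kx⁗ = λ, ρÿ + Ky⁗ = μ, αθ̈ − βθ″ = R(λ y′ − μ x′) together with the rolling constraints ẋ + R θ̇ y′ = 0 and ẏ − R θ̇ x′ = 0 on ℝ × [0,ℓ]. Then the local energy conservation law ∂/∂t [ (ρ/2)(ẋ² + ẏ²) + (α/2)θ̇² + (K/2)((x″)² + (y″)²) + (β/2)(θ′)² ] = ∂/∂s [ −K x‴ ẋ − K y‴ ẏ + β θ′ θ̇ + K (x″ ẋ′ + y″ ẏ′) ] holds at every point of ℝ × [0,ℓ]. -/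

import Mathlib

/-!
Differentiating the energy density in time and the flux in arclength, and commuting mixed
partial derivatives (Schwarz), the difference of the two sides is
ẋ (ρẍ + Kx⁗) + ẏ (ρÿ + Ky⁗) + θ̇ (αθ̈ − βθ″) for arbitrary smooth fields. Along solutions this is
the power λẋ + μẏ + Rθ̇ (λy′ − μx′) of the constraint forces, which equals
λ (ẋ + Rθ̇y′) + μ (ẏ − Rθ̇x′) and so vanishes by the rolling constraints.
-/

open MeasureTheory

/-- Partial derivative with respect to the first (time) variable. -/
noncomputable def pt (f : ℝ → ℝ → ℝ) : ℝ → ℝ → ℝ := fun t s => deriv (fun τ => f τ s) t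

/-- Partial derivative with respect to the second (arclength) variable. -/
noncomputable def ps (f : ℝ → ℝ → ℝ) : ℝ → ℝ → ℝ := fun t s => deriv (fun σ => f t σ) s

/-- Smoothness of a field of two real variables. -/
def Smooth2 (f : ℝ → ℝ → ℝ) : Prop := ContDiff ℝ (⊤ : ℕ∞) (fun p : ℝ × ℝ => f p.1 p.2)

/-- Energy density of the planar Cosserat rod. -/
noncomputable def Edens (ρ α β K : ℝ) (x y θ : ℝ → ℝ → ℝ) : ℝ → ℝ → ℝ := fun t s =>
  ρ / 2 * ((pt x t s) ^ 2 + (pt y t s) ^ 2) + α / 2 * (pt θ t s) ^ 2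
    + K / 2 * ((ps (ps x) t s) ^ 2 + (ps (ps y) t s) ^ 2) + β / 2 * (ps θ t s) ^ 2

open scoped ContDiff

section

variable {𝕜 E F G : Type*} [NontriviallyNormedField 𝕜] [NormedAddCommGroup E] [NormedSpace 𝕜 E]
  [NormedAddCommGroup F] [NormedSpace 𝕜 F] [NormedAddCommGroup G] [NormedSpace 𝕜 G]

theorem fderiv_clm_apply_const_apply {c : E → F →L[𝕜] G} {x : E} (hc : DifferentiableAt 𝕜 c x)
    (u : F) (v : E) : fderiv 𝕜 (fun y => c y u) x v = fderiv 𝕜 c x v u := by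
  simp [fderiv_clm_apply hc (differentiableAt_const u)]

end

namespace Smooth2

variable {f : ℝ → ℝ → ℝ}

theorem hasFDerivAt (hf : Smooth2 f) (p : ℝ × ℝ) :
    HasFDerivAt (Function.uncurry f) (fderiv ℝ (Function.uncurry f) p) p :=
  (hf.differentiable (by simp) p).hasFDerivAt

theorem hasDerivAt_pt_fderiv (hf : Smooth2 f) (t s : ℝ) :
    HasDerivAt (fun τ => f τ s) (fderiv ℝ (Function.uncurry f) (t, s) (1, 0)) t :=
  (hf.hasFDerivAt (t, s)).comp_hasDerivAt_of_eq t
    ((hasDerivAt_id t).prodMk (hasDerivAt_const t s)) rfl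

theorem hasDerivAt_ps_fderiv (hf : Smooth2 f) (t s : ℝ) :
    HasDerivAt (fun σ => f t σ) (fderiv ℝ (Function.uncurry f) (t, s) (0, 1)) s :=
  (hf.hasFDerivAt (t, s)).comp_hasDerivAt_of_eq s
    ((hasDerivAt_const s t).prodMk (hasDerivAt_id s)) rfl

theorem pt_eq_fderiv (hf : Smooth2 f) :
    pt f = fun t s => fderiv ℝ (Function.uncurry f) (t, s) (1, 0) :=
  funext₂ fun t s => (hf.hasDerivAt_pt_fderiv t s).deriv

theorem ps_eq_fderiv (hf : Smooth2 f) :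
    ps f = fun t s => fderiv ℝ (Function.uncurry f) (t, s) (0, 1) :=
  funext₂ fun t s => (hf.hasDerivAt_ps_fderiv t s).deriv

theorem hasDerivAt_pt (hf : Smooth2 f) (t s : ℝ) : HasDerivAt (fun τ => f τ s) (pt f t s) t := by
  simpa only [hf.pt_eq_fderiv] using hf.hasDerivAt_pt_fderiv t s

theorem hasDerivAt_ps (hf : Smooth2 f) (t s : ℝ) : HasDerivAt (fun σ => f t σ) (ps f t s) s := by
  simpa only [hf.ps_eq_fderiv] using hf.hasDerivAt_ps_fderiv t s

theorem contDiff_fderiv (hf : Smooth2 f) : ContDiff ℝ ∞ (fderiv ℝ (Function.uncurry f)) :=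
  hf.fderiv_right (by simp)

theorem fderiv_apply (hf : Smooth2 f) (v : ℝ × ℝ) :
    Smooth2 fun t s => fderiv ℝ (Function.uncurry f) (t, s) v :=
  hf.contDiff_fderiv.clm_apply contDiff_const

protected theorem pt (hf : Smooth2 f) : Smooth2 (pt f) := by
  simpa only [hf.pt_eq_fderiv] using hf.fderiv_apply (1, 0)

protected theorem ps (hf : Smooth2 f) : Smooth2 (ps f) := by
  simpa only [hf.ps_eq_fderiv] using hf.fderiv_apply (0, 1)

theorem pt_ps (hf : Smooth2 f) : pt (ps f) = ps (pt f) := by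
  rw [hf.ps.pt_eq_fderiv, hf.ps_eq_fderiv, hf.pt.ps_eq_fderiv, hf.pt_eq_fderiv]
  funext t s
  have hD := hf.contDiff_fderiv.differentiable (by simp) (t, s)
  exact (fderiv_clm_apply_const_apply hD _ _).trans
    ((hf.contDiffAt.isSymmSndFDerivAt (by simpa using ENat.LEInfty.out) _ _).trans
      (fderiv_clm_apply_const_apply hD _ _).symm)

end Smooth2

section Rod

variable {x y θ : ℝ → ℝ → ℝ}

noncomputable def energyFlux (β K : ℝ) (x y θ : ℝ → ℝ → ℝ) : ℝ → ℝ → ℝ := fun t s =>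
  -(K * ps (ps (ps x)) t s) * pt x t s - K * ps (ps (ps y)) t s * pt y t s
    + β * ps θ t s * pt θ t s
    + K * (ps (ps x) t s * ps (pt x) t s + ps (ps y) t s * ps (pt y) t s)

theorem pt_edens (ρ α β K : ℝ) (hx : Smooth2 x) (hy : Smooth2 y) (hθ : Smooth2 θ) (t s : ℝ) :
    pt (Edens ρ α β K x y θ) t s
      = ρ * (pt x t s * pt (pt x) t s + pt y t s * pt (pt y) t s)
        + α * pt θ t s * pt (pt θ) t s
        + K * (ps (ps x) t s * ps (ps (pt x)) t s + ps (ps y) t s * ps (ps (pt y)) t s)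
        + β * ps θ t s * ps (pt θ) t s := by
  have kinetic := (((hx.pt.hasDerivAt_pt t s).pow 2).add
    ((hy.pt.hasDerivAt_pt t s).pow 2)).const_mul (ρ / 2)
  have bending := (((hx.ps.ps.hasDerivAt_pt t s).pow 2).add
    ((hy.ps.ps.hasDerivAt_pt t s).pow 2)).const_mul (K / 2)
  have h : HasDerivAt (fun τ => Edens ρ α β K x y θ τ s) _ t :=
    ((kinetic.add (((hθ.pt.hasDerivAt_pt t s).pow 2).const_mul (α / 2))).add bending).add
      (((hθ.ps.hasDerivAt_pt t s).pow 2).const_mul (β / 2))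
  refine h.deriv.trans ?_
  rw [hx.ps.pt_ps, hx.pt_ps, hy.ps.pt_ps, hy.pt_ps, hθ.pt_ps]
  ring

theorem ps_energyFlux (β K : ℝ) (hx : Smooth2 x) (hy : Smooth2 y) (hθ : Smooth2 θ) (t s : ℝ) :
    ps (energyFlux β K x y θ) t s
      = -(K * ps (ps (ps (ps x))) t s * pt x t s) - K * ps (ps (ps (ps y))) t s * pt y t s
        + β * (ps (ps θ) t s * pt θ t s + ps θ t s * ps (pt θ) t s)
        + K * (ps (ps x) t s * ps (ps (pt x)) t s + ps (ps y) t s * ps (ps (pt y)) t s) := by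
  have shear :=
    (((hx.ps.ps.ps.hasDerivAt_ps t s).const_mul K).neg.mul (hx.pt.hasDerivAt_ps t s)).sub
      (((hy.ps.ps.ps.hasDerivAt_ps t s).const_mul K).mul (hy.pt.hasDerivAt_ps t s))
  have moment := (((hx.ps.ps.hasDerivAt_ps t s).mul (hx.pt.ps.hasDerivAt_ps t s)).add
    ((hy.ps.ps.hasDerivAt_ps t s).mul (hy.pt.ps.hasDerivAt_ps t s))).const_mul K
  have h : HasDerivAt (fun σ => energyFlux β K x y θ t σ) _ s :=
    (shear.add (((hθ.ps.hasDerivAt_ps t s).const_mul β).mul (hθ.pt.hasDerivAt_ps t s))).add moment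
  refine h.deriv.trans ?_
  simp only [Pi.neg_apply]
  ring

theorem pt_edens_sub_ps_energyFlux (ρ α β K : ℝ) (hx : Smooth2 x) (hy : Smooth2 y)
    (hθ : Smooth2 θ) (t s : ℝ) :
    pt (Edens ρ α β K x y θ) t s - ps (energyFlux β K x y θ) t s
      = pt x t s * (ρ * pt (pt x) t s + K * ps (ps (ps (ps x))) t s)
        + pt y t s * (ρ * pt (pt y) t s + K * ps (ps (ps (ps y))) t s)
        + pt θ t s * (α * pt (pt θ) t s - β * ps (ps θ) t s) := by
  rw [pt_edens ρ α β K hx hy hθ, ps_energyFlux β K hx hy hθ]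
  ring

end Rod

theorem local_energy_conservation_nonholonomic_rod_general
    (ρ α β K R ℓ : ℝ) (x y θ lam mu : ℝ → ℝ → ℝ)
    (hx : Smooth2 x) (hy : Smooth2 y) (hθ : Smooth2 θ)
    (heqx : ∀ t : ℝ, ∀ s ∈ Set.Icc (0 : ℝ) ℓ,
      ρ * pt (pt x) t s + K * ps (ps (ps (ps x))) t s = lam t s)
    (heqy : ∀ t : ℝ, ∀ s ∈ Set.Icc (0 : ℝ) ℓ,
      ρ * pt (pt y) t s + K * ps (ps (ps (ps y))) t s = mu t s)
    (heqθ : ∀ t : ℝ, ∀ s ∈ Set.Icc (0 : ℝ) ℓ,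
      α * pt (pt θ) t s - β * ps (ps θ) t s
        = R * (lam t s * ps y t s - mu t s * ps x t s))
    (hc1 : ∀ t : ℝ, ∀ s ∈ Set.Icc (0 : ℝ) ℓ, pt x t s + R * pt θ t s * ps y t s = 0)
    (hc2 : ∀ t : ℝ, ∀ s ∈ Set.Icc (0 : ℝ) ℓ, pt y t s - R * pt θ t s * ps x t s = 0) :
    ∀ t : ℝ, ∀ s ∈ Set.Icc (0 : ℝ) ℓ,
      pt (Edens ρ α β K x y θ) t s
        = ps (fun t' s' =>
            -(K * ps (ps (ps x)) t' s') * pt x t' s' - K * ps (ps (ps y)) t' s' * pt y t' s'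
              + β * ps θ t' s' * pt θ t' s'
              + K * (ps (ps x) t' s' * ps (pt x) t' s' + ps (ps y) t' s' * ps (pt y) t' s')) t s := by
  intro t s hs
  change pt (Edens ρ α β K x y θ) t s = ps (energyFlux β K x y θ) t s
  have balance := pt_edens_sub_ps_energyFlux ρ α β K hx hy hθ t s
  rw [heqx t s hs, heqy t s hs, heqθ t s hs] at balance
  linear_combination balance + lam t s * hc1 t s hs + mu t s * hc2 t s hs

/-- local energy conservation for the nonholonomic planar Cosserat rod. -/
theorem local_energy_conservation_nonholonomic_rod
    (ρ α β K R ℓ : ℝ) (hρ : 0 < ρ) (hα : 0 < α) (hβ : 0 < β) (hK : 0 < K) (hR : 0 < R)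
    (hℓ : 0 < ℓ) (x y θ lam mu : ℝ → ℝ → ℝ)
    (hx : Smooth2 x) (hy : Smooth2 y) (hθ : Smooth2 θ) (hlam : Smooth2 lam) (hmu : Smooth2 mu)
    (heqx : ∀ t : ℝ, ∀ s ∈ Set.Icc (0 : ℝ) ℓ,
      ρ * pt (pt x) t s + K * ps (ps (ps (ps x))) t s = lam t s)
    (heqy : ∀ t : ℝ, ∀ s ∈ Set.Icc (0 : ℝ) ℓ,
      ρ * pt (pt y) t s + K * ps (ps (ps (ps y))) t s = mu t s)
    (heqθ : ∀ t : ℝ, ∀ s ∈ Set.Icc (0 : ℝ) ℓ,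
      α * pt (pt θ) t s - β * ps (ps θ) t s
        = R * (lam t s * ps y t s - mu t s * ps x t s))
    (hc1 : ∀ t : ℝ, ∀ s ∈ Set.Icc (0 : ℝ) ℓ, pt x t s + R * pt θ t s * ps y t s = 0)
    (hc2 : ∀ t : ℝ, ∀ s ∈ Set.Icc (0 : ℝ) ℓ, pt y t s - R * pt θ t s * ps x t s = 0) :
    ∀ t : ℝ, ∀ s ∈ Set.Icc (0 : ℝ) ℓ,
      pt (Edens ρ α β K x y θ) t s
        = ps (fun t' s' =>
            -(K * ps (ps (ps x)) t' s') * pt x t' s' - K * ps (ps (ps y)) t' s' * pt y t' s'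
              + β * ps θ t' s' * pt θ t' s'
              + K * (ps (ps x) t' s' * ps (pt x) t' s' + ps (ps y) t' s' * ps (pt y) t' s')) t s :=
  local_energy_conservation_nonholonomic_rod_general ρ α β K R ℓ x y θ lam mu hx hy hθ heqx heqy
    heqθ hc1 hc2
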